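/- Conditional-entropy expansion of an optimizer (equation (14) of Theorem 1's proof): suppose random variables X : Ω → 𝒳, Y : Ω → 𝒴, U : Ω → 𝒰 (finite-valued, on a common probability space) satisfy I[X:U] = 0, I[X:U|Y] = 0, and H[Y|(X,U)] = 0. Then for every x ∈ 𝒳 with μ(X = x) > 0, H[U] = H[Y | X ← x] + Σ_{y ∈ 𝒴} μ(Y = y | X = x) · H[U | Y ← y], where any term with μ(Y = y | X = x) = 0 is taken to be 0. -/

import Mathlib

open MeasureTheory ProbabilityTheory Real

noncomputable section

variable {Ω : Type*} [MeasurableSpace Ω]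

/-- Shannon entropy (natural logarithm) of a finite-valued random variable `Z` under `μ`. -/
def ent {S : Type*} [Fintype S] (μ : Measure Ω) (Z : Ω → S) : ℝ :=
  ∑ z : S, Real.negMulLog (μ (Z ⁻¹' {z})).toReal

/-- Conditional entropy `H[Z₁ | Z₂] = H[(Z₁,Z₂)] - H[Z₂]`. -/
def condEnt {S T : Type*} [Fintype S] [Fintype T] (μ : Measure Ω)
    (Z₁ : Ω → S) (Z₂ : Ω → T) : ℝ :=
  ent μ (fun ω => (Z₁ ω, Z₂ ω)) - ent μ Z₂

/-- Mutual information `I[Z₁ : Z₂] = H[Z₁] + H[Z₂] - H[(Z₁,Z₂)]`. -/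
def mutInfo {S T : Type*} [Fintype S] [Fintype T] (μ : Measure Ω)
    (Z₁ : Ω → S) (Z₂ : Ω → T) : ℝ :=
  ent μ Z₁ + ent μ Z₂ - ent μ (fun ω => (Z₁ ω, Z₂ ω))

/-- Conditional mutual information
`I[Z₁ : Z₂ | Z₃] = H[(Z₁,Z₃)] + H[(Z₂,Z₃)] - H[(Z₁,Z₂,Z₃)] - H[Z₃]`. -/
def condMutInfo {S T R : Type*} [Fintype S] [Fintype T] [Fintype R] (μ : Measure Ω)
    (Z₁ : Ω → S) (Z₂ : Ω → T) (Z₃ : Ω → R) : ℝ :=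
  ent μ (fun ω => (Z₁ ω, Z₃ ω)) + ent μ (fun ω => (Z₂ ω, Z₃ ω))
    - ent μ (fun ω => (Z₁ ω, Z₂ ω, Z₃ ω)) - ent μ Z₃

/-! Since `I[X:U] = 0`, conditioning on `X = x` does not change the law of `U`; since
`H[Y | (X,U)] = 0`, under `μ[|X ← x]` the variable `Y` is a function of `U`. Hence
`H[U] = H[(U,Y) | X ← x]`, which the chain rule splits into `H[Y | X ← x]` plus the average of
`H[U | X ← x, Y ← y]`, and `I[X:U|Y] = 0` identifies the law of `U` given `X = x, Y = y` with its
law given `Y = y`. Each vanishing information quantity is an average over the conditioning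
variable of nonnegative terms, so every term vanishes; for mutual information this is the
equality case of Jensen's inequality for the strictly concave `negMulLog`. -/

lemma eq_zero_of_sum_mul_eq_zero {ι : Type*} [Fintype ι] {a f : ι → ℝ} (ha : ∀ i, 0 ≤ a i)
    (hf : ∀ i, 0 ≤ f i) (h : ∑ i, a i * f i = 0) {i : ι} (hi : a i ≠ 0) : f i = 0 :=
  (mul_eq_zero.1 ((Finset.sum_eq_zero_iff_of_nonneg fun j _ => mul_nonneg (ha j) (hf j)).1 h i
    (Finset.mem_univ i))).resolve_left hi

section Entropy

open Finset

variable {S T R : Type*} [Fintype S] [Fintype T] [Fintype R]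

lemma ent_eq_sum_negMulLog_measureReal (μ : Measure Ω) (Z : Ω → S) :
    ent μ Z = ∑ z, negMulLog (μ.real (Z ⁻¹' {z})) := rfl

lemma ent_comp_equiv (μ : Measure Ω) (Z : Ω → S) (e : S ≃ T) :
    ent μ (fun ω => e (Z ω)) = ent μ Z := by
  rw [ent_eq_sum_negMulLog_measureReal, ← e.sum_comp]
  refine sum_congr rfl fun z _ => ?_
  congr 3
  ext ω
  simp [e.apply_eq_iff_eq]

lemma ent_nonneg (μ : Measure Ω) [IsZeroOrProbabilityMeasure μ] (Z : Ω → S) : 0 ≤ ent μ Z :=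
  sum_nonneg fun _ _ => negMulLog_nonneg measureReal_nonneg measureReal_le_one

lemma ent_eq_of_measureReal_preimage_eq {μ ν : Measure Ω} {Z : Ω → S}
    (h : ∀ z, μ.real (Z ⁻¹' {z}) = ν.real (Z ⁻¹' {z})) : ent μ Z = ent ν Z := by
  simp only [ent_eq_sum_negMulLog_measureReal, h]

variable [MeasurableSpace T] [MeasurableSingletonClass T]

lemma measureReal_eq_sum_mul_cond (μ : Measure Ω) [IsFiniteMeasure μ] {W : Ω → T}
    (hW : Measurable W) (A : Set Ω) :
    μ.real A = ∑ w, μ.real (W ⁻¹' {w}) * μ[|W ⁻¹' {w}].real A := by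
  conv_lhs => rw [← sum_meas_smul_cond_fiber hW μ]
  simp only [measureReal_def, Measure.coe_finsetSum, Measure.coe_smul, Finset.sum_apply,
    Pi.smul_apply, smul_eq_mul]
  rw [ENNReal.toReal_sum fun w _ => ENNReal.mul_ne_top (measure_ne_top μ _) (measure_ne_top _ _)]
  simp only [ENNReal.toReal_mul]

lemma sum_measureReal_preimage_singleton_eq_one (μ : Measure Ω) [IsProbabilityMeasure μ]
    {W : Ω → T} (hW : Measurable W) : ∑ w, μ.real (W ⁻¹' {w}) = 1 := by
  rw [sum_measureReal_preimage_singleton _ fun w _ => hW (measurableSet_singleton w),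
    coe_univ, Set.preimage_univ, probReal_univ]

lemma sum_mul_negMulLog_cond_le (μ : Measure Ω) [IsProbabilityMeasure μ] {W : Ω → T}
    (hW : Measurable W) (A : Set Ω) :
    ∑ w, μ.real (W ⁻¹' {w}) * negMulLog (μ[|W ⁻¹' {w}].real A) ≤ negMulLog (μ.real A) := by
  rw [measureReal_eq_sum_mul_cond μ hW A]
  exact concaveOn_negMulLog.le_map_sum (fun _ _ => measureReal_nonneg)
    (sum_measureReal_preimage_singleton_eq_one μ hW) fun _ _ => Set.mem_Ici.2 measureReal_nonneg

lemma measureReal_cond_eq_of_negMulLog_le (μ : Measure Ω) [IsProbabilityMeasure μ] {W : Ω → T}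
    (hW : Measurable W) {A : Set Ω}
    (h : negMulLog (μ.real A) ≤ ∑ w, μ.real (W ⁻¹' {w}) * negMulLog (μ[|W ⁻¹' {w}].real A))
    {w : T} (hw : μ (W ⁻¹' {w}) ≠ 0) : μ[|W ⁻¹' {w}].real A = μ.real A := by
  have hconst := (strictConcaveOn_negMulLog.map_sum_eq_iff_of_nonneg
    (p := fun v => μ[|W ⁻¹' {v}].real A) (fun _ _ => measureReal_nonneg)
    (sum_measureReal_preimage_singleton_eq_one μ hW) fun _ _ => Set.mem_Ici.2 measureReal_nonneg).1
    (by
      simp only [smul_eq_mul, ← measureReal_eq_sum_mul_cond μ hW A]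
      exact le_antisymm h (sum_mul_negMulLog_cond_le μ hW A))
  have hw' : μ.real (W ⁻¹' {w}) ≠ 0 := (measureReal_ne_zero_iff (measure_ne_top _ _)).2 hw
  calc μ[|W ⁻¹' {w}].real A
      = ∑ v, μ.real (W ⁻¹' {v}) * μ[|W ⁻¹' {w}].real A := by
        rw [← sum_mul, sum_measureReal_preimage_singleton_eq_one μ hW, one_mul]
    _ = ∑ v, μ.real (W ⁻¹' {v}) * μ[|W ⁻¹' {v}].real A := by
        refine sum_congr rfl fun v _ => ?_
        rcases eq_or_ne (μ.real (W ⁻¹' {v})) 0 with hv | hv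
        · rw [hv, zero_mul, zero_mul]
        · rw [hconst (mem_univ v) hv (mem_univ w) hw']
    _ = μ.real A := (measureReal_eq_sum_mul_cond μ hW A).symm

lemma sum_mul_ent_cond_le_ent (μ : Measure Ω) [IsProbabilityMeasure μ] {W : Ω → T}
    (hW : Measurable W) (Z : Ω → S) :
    ∑ w, μ.real (W ⁻¹' {w}) * ent μ[|W ⁻¹' {w}] Z ≤ ent μ Z := by
  simp only [ent_eq_sum_negMulLog_measureReal, mul_sum]
  rw [sum_comm]
  exact sum_le_sum fun z _ => sum_mul_negMulLog_cond_le μ hW _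

lemma measureReal_cond_eq_of_ent_le (μ : Measure Ω) [IsProbabilityMeasure μ] {W : Ω → T}
    (hW : Measurable W) {Z : Ω → S} (h : ent μ Z ≤ ∑ w, μ.real (W ⁻¹' {w}) * ent μ[|W ⁻¹' {w}] Z)
    {w : T} (hw : μ (W ⁻¹' {w}) ≠ 0) (z : S) :
    μ[|W ⁻¹' {w}].real (Z ⁻¹' {z}) = μ.real (Z ⁻¹' {z}) := by
  refine measureReal_cond_eq_of_negMulLog_le μ hW ?_ hw
  by_contra! hlt
  simp only [ent_eq_sum_negMulLog_measureReal, mul_sum] at h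
  rw [sum_comm] at h
  exact h.not_gt (sum_lt_sum (fun z _ => sum_mul_negMulLog_cond_le μ hW _) ⟨z, mem_univ z, hlt⟩)

variable [MeasurableSpace S] [MeasurableSingletonClass S]

lemma ent_pair_eq_add_sum_mul_ent_cond (μ : Measure Ω) [IsFiniteMeasure μ] {Z : Ω → S}
    {W : Ω → T} (hZ : Measurable Z) (hW : Measurable W) :
    ent μ (fun ω => (Z ω, W ω)) = ent μ W + ∑ w, μ.real (W ⁻¹' {w}) * ent μ[|W ⁻¹' {w}] Z := by
  have hfiber : ∀ w, ∑ z, negMulLog (μ.real ((fun ω => (Z ω, W ω)) ⁻¹' {(z, w)}))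
      = negMulLog (μ.real (W ⁻¹' {w})) + μ.real (W ⁻¹' {w}) * ent μ[|W ⁻¹' {w}] Z := by
    intro w
    have hW' : MeasurableSet (W ⁻¹' {w}) := hW (measurableSet_singleton w)
    set p := μ.real (W ⁻¹' {w})
    set q : S → ℝ := fun z => μ[|W ⁻¹' {w}].real (Z ⁻¹' {z})
    have hmass : ∀ z, μ.real ((fun ω => (Z ω, W ω)) ⁻¹' {(z, w)}) = q z * p := by
      intro z
      have hset : (fun ω => (Z ω, W ω)) ⁻¹' {(z, w)} = W ⁻¹' {w} ∩ Z ⁻¹' {z} := by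
        ext ω; simp [Prod.ext_iff, and_comm]
      rw [hset, measureReal_def, ← cond_mul_eq_inter hW', ENNReal.toReal_mul]
      rfl
    have htotal : (∑ z, q z) * p = p := by
      rw [sum_measureReal_preimage_singleton _ fun z _ => hZ (measurableSet_singleton z),
        coe_univ, Set.preimage_univ]
      simp only [p, measureReal_def, ← ENNReal.toReal_mul, cond_mul_eq_inter hW', Set.inter_univ]
    -- `negMulLog p = -p * log p`, so this needs no case split on `p = 0`
    have hlog : (∑ z, q z) * negMulLog p = negMulLog p := by
      simp only [negMulLog, ← mul_assoc, mul_neg, htotal]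
    simp only [hmass, negMulLog_mul, sum_add_distrib, ← sum_mul, ← mul_sum, hlog]
    rw [add_comm]
    rfl
  rw [ent_eq_sum_negMulLog_measureReal, Fintype.sum_prod_type_right]
  simp only [hfiber, sum_add_distrib]
  rfl

lemma condEnt_eq_sum_mul_ent_cond (μ : Measure Ω) [IsFiniteMeasure μ] {Z : Ω → S} {W : Ω → T}
    (hZ : Measurable Z) (hW : Measurable W) :
    condEnt μ Z W = ∑ w, μ.real (W ⁻¹' {w}) * ent μ[|W ⁻¹' {w}] Z := by
  rw [condEnt, ent_pair_eq_add_sum_mul_ent_cond μ hZ hW, add_sub_cancel_left]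

lemma condEnt_nonneg (μ : Measure Ω) [IsFiniteMeasure μ] {Z : Ω → S} {W : Ω → T}
    (hZ : Measurable Z) (hW : Measurable W) : 0 ≤ condEnt μ Z W := by
  rw [condEnt_eq_sum_mul_ent_cond μ hZ hW]
  exact sum_nonneg fun w _ => mul_nonneg measureReal_nonneg (ent_nonneg _ Z)

lemma mutInfo_eq_ent_sub_sum_mul_ent_cond (μ : Measure Ω) [IsFiniteMeasure μ] {X : Ω → T}
    {U : Ω → S} (hX : Measurable X) (hU : Measurable U) :
    mutInfo μ X U = ent μ U - ∑ x, μ.real (X ⁻¹' {x}) * ent μ[|X ⁻¹' {x}] U := by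
  have hswap : ent μ (fun ω => (X ω, U ω)) = ent μ (fun ω => (U ω, X ω)) :=
    ent_comp_equiv μ (fun ω => (U ω, X ω)) (Equiv.prodComm S T)
  rw [mutInfo, hswap, ent_pair_eq_add_sum_mul_ent_cond μ hU hX]
  ring

lemma mutInfo_nonneg (μ : Measure Ω) [IsZeroOrProbabilityMeasure μ] {X : Ω → T} {U : Ω → S}
    (hX : Measurable X) (hU : Measurable U) : 0 ≤ mutInfo μ X U := by
  rcases eq_zero_or_isProbabilityMeasure μ with rfl | hμ
  · simp [mutInfo, ent]
  · rw [mutInfo_eq_ent_sub_sum_mul_ent_cond μ hX hU, sub_nonneg]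
    exact sum_mul_ent_cond_le_ent μ hX U

lemma measureReal_cond_eq_of_mutInfo_eq_zero (μ : Measure Ω) [IsProbabilityMeasure μ]
    {X : Ω → T} {U : Ω → S} (hX : Measurable X) (hU : Measurable U) (h : mutInfo μ X U = 0)
    {x : T} (hx : μ (X ⁻¹' {x}) ≠ 0) (u : S) :
    μ[|X ⁻¹' {x}].real (U ⁻¹' {u}) = μ.real (U ⁻¹' {u}) := by
  rw [mutInfo_eq_ent_sub_sum_mul_ent_cond μ hX hU, sub_eq_zero] at h
  exact measureReal_cond_eq_of_ent_le μ hX h.le hx u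

variable [MeasurableSpace R] [MeasurableSingletonClass R]

lemma condMutInfo_eq_sum_mul_mutInfo_cond (μ : Measure Ω) [IsFiniteMeasure μ] {X : Ω → S}
    {U : Ω → R} {Y : Ω → T} (hX : Measurable X) (hU : Measurable U) (hY : Measurable Y) :
    condMutInfo μ X U Y = ∑ y, μ.real (Y ⁻¹' {y}) * mutInfo μ[|Y ⁻¹' {y}] X U := by
  have hassoc : ent μ (fun ω => (X ω, U ω, Y ω)) = ent μ (fun ω => ((X ω, U ω), Y ω)) :=
    ent_comp_equiv μ (fun ω => ((X ω, U ω), Y ω)) (Equiv.prodAssoc S R T)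
  rw [condMutInfo, hassoc, ent_pair_eq_add_sum_mul_ent_cond μ hX hY,
    ent_pair_eq_add_sum_mul_ent_cond μ hU hY,
    ent_pair_eq_add_sum_mul_ent_cond μ (hX.prodMk hU) hY]
  simp only [mutInfo, mul_sub, mul_add, sum_sub_distrib, sum_add_distrib]
  ring

lemma condEnt_pair_eq_sum_mul_condEnt_cond (μ : Measure Ω) [IsFiniteMeasure μ] {Y : Ω → T}
    {X : Ω → S} {U : Ω → R} (hY : Measurable Y) (hX : Measurable X) (hU : Measurable U) :
    condEnt μ Y (fun ω => (X ω, U ω))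
      = ∑ x, μ.real (X ⁻¹' {x}) * condEnt μ[|X ⁻¹' {x}] Y U := by
  have hYXU : ent μ (fun ω => (Y ω, X ω, U ω)) = ent μ (fun ω => ((Y ω, U ω), X ω)) :=
    ent_comp_equiv μ (fun ω => ((Y ω, U ω), X ω))
      ((Equiv.prodAssoc T R S).trans (Equiv.prodCongr (Equiv.refl T) (Equiv.prodComm R S)))
  have hXU : ent μ (fun ω => (X ω, U ω)) = ent μ (fun ω => (U ω, X ω)) :=
    ent_comp_equiv μ (fun ω => (U ω, X ω)) (Equiv.prodComm R S)
  rw [condEnt, hYXU, hXU, ent_pair_eq_add_sum_mul_ent_cond μ (hY.prodMk hU) hX,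
    ent_pair_eq_add_sum_mul_ent_cond μ hU hX]
  simp only [condEnt, mul_sub, sum_sub_distrib]
  ring

lemma measureReal_cond_inter_eq_of_condMutInfo_eq_zero (μ : Measure Ω) [IsFiniteMeasure μ]
    {X : Ω → S} {U : Ω → R} {Y : Ω → T} (hX : Measurable X) (hU : Measurable U)
    (hY : Measurable Y) (h : condMutInfo μ X U Y = 0) {x : S} {y : T}
    (hxy : μ (X ⁻¹' {x} ∩ Y ⁻¹' {y}) ≠ 0) (u : R) :
    μ[|X ⁻¹' {x} ∩ Y ⁻¹' {y}].real (U ⁻¹' {u}) = μ[|Y ⁻¹' {y}].real (U ⁻¹' {u}) := by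
  have hYy : MeasurableSet (Y ⁻¹' {y}) := hY (measurableSet_singleton y)
  have hy : μ (Y ⁻¹' {y}) ≠ 0 := fun h0 => hxy (measure_mono_null Set.inter_subset_right h0)
  have := cond_isProbabilityMeasure (μ := μ) hy
  have hI : mutInfo μ[|Y ⁻¹' {y}] X U = 0 := by
    rw [condMutInfo_eq_sum_mul_mutInfo_cond μ hX hU hY] at h
    exact eq_zero_of_sum_mul_eq_zero (fun _ => measureReal_nonneg)
      (fun _ => mutInfo_nonneg _ hX hU) h ((measureReal_ne_zero_iff (measure_ne_top _ _)).2 hy)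
  have hx : μ[|Y ⁻¹' {y}] (X ⁻¹' {x}) ≠ 0 :=
    (cond_pos_of_inter_ne_zero hYy (by rwa [Set.inter_comm])).ne'
  rw [Set.inter_comm, ← cond_cond_eq_cond_inter hYy (hX (measurableSet_singleton x))]
  exact measureReal_cond_eq_of_mutInfo_eq_zero _ hX hU hI hx u

lemma condEnt_cond_eq_zero_of_condEnt_pair_eq_zero (μ : Measure Ω) [IsFiniteMeasure μ]
    {Y : Ω → T} {X : Ω → S} {U : Ω → R} (hY : Measurable Y) (hX : Measurable X)
    (hU : Measurable U) (h : condEnt μ Y (fun ω => (X ω, U ω)) = 0) {x : S}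
    (hx : μ (X ⁻¹' {x}) ≠ 0) : condEnt μ[|X ⁻¹' {x}] Y U = 0 := by
  rw [condEnt_pair_eq_sum_mul_condEnt_cond μ hY hX hU] at h
  exact eq_zero_of_sum_mul_eq_zero (fun _ => measureReal_nonneg)
    (fun _ => condEnt_nonneg _ hY hU) h ((measureReal_ne_zero_iff (measure_ne_top _ _)).2 hx)

end Entropy

theorem optimizer_cond_entropy_expansion_general {𝒳 𝒴 𝒰 : Type*} [Fintype 𝒳] [MeasurableSpace 𝒳] [MeasurableSingletonClass 𝒳]
    [Fintype 𝒴] [MeasurableSpace 𝒴] [MeasurableSingletonClass 𝒴]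
    [Fintype 𝒰] [MeasurableSpace 𝒰] [MeasurableSingletonClass 𝒰]
    (μ : Measure Ω) [IsProbabilityMeasure μ]
    (X : Ω → 𝒳) (Y : Ω → 𝒴) (U : Ω → 𝒰)
    (hX : Measurable X) (hY : Measurable Y) (hU : Measurable U)
    (h1 : mutInfo μ X U = 0)
    (h2 : condMutInfo μ X U Y = 0)
    (h3 : condEnt μ Y (fun ω => (X ω, U ω)) = 0) :
    ∀ x : 𝒳, 0 < μ (X ⁻¹' {x}) →
      ent μ U = ent (μ[|X ⁻¹' {x}]) Y
        + ∑ y : 𝒴, ((μ[|X ⁻¹' {x}]) (Y ⁻¹' {y})).toReal * ent (μ[|Y ⁻¹' {y}]) U := by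
  intro x hx
  have hXx : MeasurableSet (X ⁻¹' {x}) := hX (measurableSet_singleton x)
  have hU_indep : ent μ[|X ⁻¹' {x}] U = ent μ U :=
    ent_eq_of_measureReal_preimage_eq (measureReal_cond_eq_of_mutInfo_eq_zero μ hX hU h1 hx.ne')
  have hY_det : ent μ[|X ⁻¹' {x}] (fun ω => (Y ω, U ω)) = ent μ[|X ⁻¹' {x}] U := by
    have := condEnt_cond_eq_zero_of_condEnt_pair_eq_zero μ hY hX hU h3 hx.ne'
    rwa [condEnt, sub_eq_zero] at this
  have hU_cond_indep : ∀ y, μ[|X ⁻¹' {x}] (Y ⁻¹' {y}) ≠ 0 →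
      ent μ[|X ⁻¹' {x}][|Y ⁻¹' {y}] U = ent μ[|Y ⁻¹' {y}] U := fun y hy => by
    rw [cond_cond_eq_cond_inter hXx (hY (measurableSet_singleton y))]
    exact ent_eq_of_measureReal_preimage_eq (measureReal_cond_inter_eq_of_condMutInfo_eq_zero μ
      hX hU hY h2 (inter_pos_of_cond_ne_zero hXx hy).ne')
  calc ent μ U
      = ent μ[|X ⁻¹' {x}] (fun ω => (U ω, Y ω)) := by
        rw [← hU_indep, ← hY_det]
        exact ent_comp_equiv _ (fun ω => (U ω, Y ω)) (Equiv.prodComm _ _)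
    _ = ent μ[|X ⁻¹' {x}] Y
          + ∑ y, (μ[|X ⁻¹' {x}]).real (Y ⁻¹' {y}) * ent μ[|X ⁻¹' {x}][|Y ⁻¹' {y}] U :=
        ent_pair_eq_add_sum_mul_ent_cond _ hU hY
    _ = _ := by
        congr 1
        refine Finset.sum_congr rfl fun y _ => ?_
        rcases eq_or_ne (μ[|X ⁻¹' {x}] (Y ⁻¹' {y})) 0 with hy | hy
        · simp [Measure.real, hy]
        · rw [hU_cond_indep y hy]
          rfl

/-- Conditional-entropy expansion of an optimizer (eq. (14) of Theorem 1's proof). -/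
theorem optimizer_cond_entropy_expansion {𝒳 𝒴 𝒰 : Type*} [Fintype 𝒳] [Nonempty 𝒳] [MeasurableSpace 𝒳] [MeasurableSingletonClass 𝒳]
    [Fintype 𝒴] [Nonempty 𝒴] [MeasurableSpace 𝒴] [MeasurableSingletonClass 𝒴]
    [Fintype 𝒰] [Nonempty 𝒰] [MeasurableSpace 𝒰] [MeasurableSingletonClass 𝒰]
    (μ : Measure Ω) [IsProbabilityMeasure μ]
    (X : Ω → 𝒳) (Y : Ω → 𝒴) (U : Ω → 𝒰)
    (hX : Measurable X) (hY : Measurable Y) (hU : Measurable U)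
    (h1 : mutInfo μ X U = 0)
    (h2 : condMutInfo μ X U Y = 0)
    (h3 : condEnt μ Y (fun ω => (X ω, U ω)) = 0) :
    ∀ x : 𝒳, 0 < μ (X ⁻¹' {x}) →
      ent μ U = ent (μ[|X ⁻¹' {x}]) Y
        + ∑ y : 𝒴, ((μ[|X ⁻¹' {x}]) (Y ⁻¹' {y})).toReal * ent (μ[|Y ⁻¹' {y}]) U :=
  optimizer_cond_entropy_expansion_general μ X Y U hX hY hU h1 h2 h3
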